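/- arXiv:2303.05673 — 3 statements merged into one kernel-verified Lean document; each statement's English description precedes it below -/
import Mathlib

section
/- For any directed multigraph G there exists a non-edge-collapsing graph equivalence relation on G whose vertex component is o-equivalence (two vertices being o-equivalent when their outgoing subgraphs are rooted-isomorphic). -/
/-- A directed multigraph: vertices, edges, origin and terminus maps. -/
structure Multigraph where
  V : Type
  E : Type
  o : E → V
  t : E → V

namespace Multigraph

/-- Graph homomorphism. -/
structure Hom (G H : Multigraph) where
  onV : G.V → H.V
  onE : G.E → H.E
  map_o : ∀ e, H.o (onE e) = onV (G.o e)
  map_t : ∀ e, H.t (onE e) = onV (G.t e)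

/-- Graph isomorphism. -/
structure Iso (G H : Multigraph) extends Hom G H where
  bijV : Function.Bijective onV
  bijE : Function.Bijective onE

/-- Rooted isomorphism of rooted multigraphs. -/
def RootedIso (G : Multigraph) (S : G.V) (H : Multigraph) (R : H.V) : Prop :=
  ∃ φ : Iso G H, φ.onV S = R

/-- Outgoing edge neighbourhood of a vertex. -/
def Eo (G : Multigraph) (v : G.V) : Set G.E := {e | G.o e = v}

/-- Incoming edge neighbourhood of a vertex. -/
def Et (G : Multigraph) (v : G.V) : Set G.E := {e | G.t e = v}

/-- A graph equivalence relation: compatible equivalences on vertices and edges. -/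
structure GraphEquiv (G : Multigraph) where
  rV : G.V → G.V → Prop
  rE : G.E → G.E → Prop
  equivV : Equivalence rV
  equivE : Equivalence rE
  compat_o : ∀ e f, rE e f → rV (G.o e) (G.o f)
  compat_t : ∀ e f, rE e f → rV (G.t e) (G.t f)

/-- Non-edge-collapsing graph equivalence relation. -/
def GraphEquiv.NonEdgeCollapsing {G : Multigraph} (s : GraphEquiv G) : Prop :=
  ∀ v v', s.rV v v' → ∀ e, G.o e = v → ∃! e', G.o e' = v' ∧ s.rE e e'

/-- Quotient graph by a graph equivalence relation. -/
def GraphEquiv.quot {G : Multigraph} (s : GraphEquiv G) : Multigraph where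
  V := Quot s.rV
  E := Quot s.rE
  o := Quot.lift (fun e => Quot.mk s.rV (G.o e)) (fun e f h => Quot.sound (s.compat_o e f h))
  t := Quot.lift (fun e => Quot.mk s.rV (G.t e)) (fun e f h => Quot.sound (s.compat_t e f h))

/-- A graph is non-redundant if its only non-edge-collapsing equivalence relation is trivial. -/
def NonRedundant (G : Multigraph) : Prop :=
  ∀ s : GraphEquiv G, s.NonEdgeCollapsing →
    (∀ v w, s.rV v w → v = w) ∧ (∀ e f, s.rE e f → e = f)

/-- Directed walks in `G` starting at `S`, indexed by the terminus. -/
inductive Walk (G : Multigraph) (S : G.V) : G.V → Type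
  | nil : Walk G S S
  | snoc {v : G.V} (w : Walk G S v) (e : G.E) (h : G.o e = v) : Walk G S (G.t e)

/-- Length of a walk. -/
def Walk.length {G : Multigraph} {S : G.V} : ∀ {v : G.V}, Walk G S v → ℕ
  | _, .nil => 0
  | _, .snoc w _ _ => w.length + 1

/-- Reachability by a directed walk. -/
def Reaches (G : Multigraph) (x y : G.V) : Prop := Nonempty (Walk G x y)

/-- `S` is a root: every vertex is reachable from `S`. -/
def IsRoot (G : Multigraph) (S : G.V) : Prop := ∀ v, Reaches G S v

/-- No two edges share a terminus. -/
def NoClashes (G : Multigraph) : Prop := ∀ e f : G.E, G.t e = G.t f → e = f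

/-- No non-empty closed walks. -/
def Acyclic (G : Multigraph) : Prop := ∀ v : G.V, ∀ w : Walk G v v, w.length = 0

/-- The outgoing subgraph `G_x`: induced on the vertices reachable from `x`. -/
def outGraph (G : Multigraph) (x : G.V) : Multigraph where
  V := {y : G.V // Reaches G x y}
  E := {e : G.E // Reaches G x (G.o e)}
  o := fun e => ⟨G.o e.1, e.2⟩
  t := fun e => ⟨G.t e.1, e.2.elim fun w => ⟨w.snoc e.1 rfl⟩⟩

/-- The natural root of `G_x`. -/
def rootOut (G : Multigraph) (x : G.V) : (outGraph G x).V := ⟨x, ⟨Walk.nil⟩⟩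

/-- o-equivalence of vertices: rooted isomorphism of their outgoing graphs. -/
def OEquiv (G : Multigraph) (v w : G.V) : Prop :=
  RootedIso (outGraph G v) (rootOut G v) (outGraph G w) (rootOut G w)

/-- Walks starting at `S` (with arbitrary terminus). -/
abbrev WalkFrom (G : Multigraph) (S : G.V) : Type := Σ v : G.V, Walk G S v

/-- Terminus of a walk. -/
def term {G : Multigraph} {S : G.V} (w : WalkFrom G S) : G.V := w.1

/-- The unfolding tree `T(G, S)`: vertices are walks from `S`, edges are one-step extensions. -/
def unfoldTree (G : Multigraph) (S : G.V) : Multigraph where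
  V := WalkFrom G S
  E := Σ v : G.V, Walk G S v × {e : G.E // G.o e = v}
  o := fun x => ⟨x.1, x.2.1⟩
  t := fun x => ⟨G.t x.2.2.1, x.2.1.snoc x.2.2.1 x.2.2.2⟩

/-- The empty walk at `S`, root of the unfolding tree. -/
def nilWalk (G : Multigraph) (S : G.V) : WalkFrom G S := ⟨S, Walk.nil⟩

/-- Prefix order on walks from `S`. -/
inductive IsPrefix (G : Multigraph) (S : G.V) : WalkFrom G S → WalkFrom G S → Prop
  | refl (w : WalkFrom G S) : IsPrefix G S w w
  | snoc {w : WalkFrom G S} {v : G.V} (u : Walk G S v) (e : G.E) (h : G.o e = v) :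
      IsPrefix G S w ⟨v, u⟩ → IsPrefix G S w ⟨G.t e, u.snoc e h⟩

/-- The half-tree of the unfolding tree rooted at the walk `w`. -/
def halfTree (G : Multigraph) (S : G.V) (w : WalkFrom G S) : Multigraph where
  V := {u : WalkFrom G S // IsPrefix G S w u}
  E := {x : Σ v : G.V, Walk G S v × {e : G.E // G.o e = v} // IsPrefix G S w ⟨x.1, x.2.1⟩}
  o := fun x => ⟨⟨x.1.1, x.1.2.1⟩, x.2⟩
  t := fun x => ⟨⟨G.t x.1.2.2.1, x.1.2.1.snoc x.1.2.2.1 x.1.2.2.2⟩,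
    IsPrefix.snoc x.1.2.1 x.1.2.2.1 x.1.2.2.2 x.2⟩

/-- A subspace of the unfolding tree: a set of walks closed under extension. -/
def IsSubspace (G : Multigraph) (S : G.V) (𝒮 : Set (WalkFrom G S)) : Prop :=
  ∀ w ∈ 𝒮, ∀ w', IsPrefix G S w w' → w' ∈ 𝒮

/-- An inescapable subspace: every walk extends into it. -/
def Inescapable (G : Multigraph) (S : G.V) (𝒮 : Set (WalkFrom G S)) : Prop :=
  ∀ w : WalkFrom G S, ∃ u ∈ 𝒮, IsPrefix G S w u

/-- A cofinite subspace: a finite union of half-trees. -/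
def CofiniteSubspace (G : Multigraph) (S : G.V) (𝒮 : Set (WalkFrom G S)) : Prop :=
  ∃ F : Set (WalkFrom G S), F.Finite ∧ 𝒮 = {u | ∃ x ∈ F, IsPrefix G S x u}

/-- `B` is a basis of the subspace `𝒮`: a prefix-antichain in `𝒮` such that every
walk in `𝒮` has a prefix in `B`. -/
def IsBasis (G : Multigraph) (S : G.V) (𝒮 B : Set (WalkFrom G S)) : Prop :=
  B ⊆ 𝒮 ∧ (∀ b ∈ B, ∀ b' ∈ B, IsPrefix G S b b' → b = b') ∧
    ∀ w ∈ 𝒮, ∃ b ∈ B, IsPrefix G S b w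

/-- Deleting a set of edges from a graph (also removing vertices all of whose
incident edges are deleted). -/
def deleteEdges (G : Multigraph) (F : Set G.E) : Multigraph where
  V := {v : G.V // ¬((∃ e, G.o e = v ∨ G.t e = v) ∧ ∀ e, (G.o e = v ∨ G.t e = v) → e ∈ F)}
  E := {e : G.E // e ∉ F}
  o := fun e => ⟨G.o e.1, fun h => e.2 (h.2 e.1 (Or.inl rfl))⟩
  t := fun e => ⟨G.t e.1, fun h => e.2 (h.2 e.1 (Or.inr rfl))⟩

/-- Two trees are almost isomorphic: after removing finite subtrees (given by their
finite edge sets), the remainders are isomorphic. -/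
def AlmostIso (T1 T2 : Multigraph) : Prop :=
  ∃ F1 : Set T1.E, F1.Finite ∧ ∃ F2 : Set T2.E, F2.Finite ∧
    Nonempty (Iso (deleteEdges T1 F1) (deleteEdges T2 F2))

open scoped Classical in
/-- The multiset of termini of the outgoing edges of `v`. -/
noncomputable def outSum (G : Multigraph) [Fintype G.E] (v : G.V) : Multiset G.V :=
  ∑ e ∈ Finset.univ.filter (fun e => G.o e = v), ({G.t e} : Multiset G.V)

/-- The defining relations of the graph monoid: `v = Σ_{e ∈ E_o(v)} t(e)` for non-sinks. -/
def monoidRel (G : Multigraph) [Fintype G.E] : Multiset G.V → Multiset G.V → Prop :=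
  fun s u => ∃ v : G.V, (∃ e, G.o e = v) ∧ s = {v} ∧ u = outSum G v

/-- Equality in the graph monoid `M(G)`: the additive congruence generated by the
graph relations on the free commutative monoid `Multiset G.V`. -/
def monoidEq (G : Multigraph) [Fintype G.E] (s u : Multiset G.V) : Prop :=
  addConGen (monoidRel G) s u

/-- A robustly rooted graph: it has a root, and every root has an out-neighbour that
is again a root. -/
def RobustlyRooted (G : Multigraph) : Prop :=
  (∃ S, IsRoot G S) ∧ ∀ v, IsRoot G v → ∃ e, G.o e = v ∧ IsRoot G (G.t e)

/-- The two-vertex multigraph with adjacency matrix `(A B; C D)`;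
`false` is the vertex `x`, `true` is the vertex `y`. -/
def twoVertexGraph (A B C D : ℕ) : Multigraph where
  V := Bool
  E := (Fin A ⊕ Fin B) ⊕ (Fin C ⊕ Fin D)
  o := fun e => match e with | .inl _ => false | .inr _ => true
  t := fun e => match e with
    | .inl (.inl _) => false
    | .inl (.inr _) => true
    | .inr (.inl _) => false
    | .inr (.inr _) => true

instance (A B C D : ℕ) : Fintype (twoVertexGraph A B C D).E :=
  inferInstanceAs (Fintype ((Fin A ⊕ Fin B) ⊕ (Fin C ⊕ Fin D)))

/-!
Choose in every o-equivalence class a representative `r` and, for each `v` in the class, a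
rooted isomorphism `G_v ≅ G_r`. It identifies the out-edges of `v` with those of `r`, and two
edges are declared equivalent when they correspond to the same out-edge of the common
representative; this makes the relation non-edge-collapsing by construction. Termini of
equivalent edges are o-equivalent because a rooted isomorphism `G_v ≅ G_w` restricts, at every
vertex `u` of `G_v`, to a rooted isomorphism `G_u ≅ G_{φ u}`.
-/

noncomputable section

section Isomorphisms

variable {G H K : Multigraph}

def Iso.equivV (φ : Iso G H) : G.V ≃ H.V := Equiv.ofBijective φ.onV φ.bijV

def Iso.equivE (φ : Iso G H) : G.E ≃ H.E := Equiv.ofBijective φ.onE φ.bijE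

def Iso.ofEquiv (eV : G.V ≃ H.V) (eE : G.E ≃ H.E) (map_o : ∀ e, H.o (eE e) = eV (G.o e))
    (map_t : ∀ e, H.t (eE e) = eV (G.t e)) : Iso G H :=
  ⟨⟨eV, eE, map_o, map_t⟩, eV.bijective, eE.bijective⟩

def Iso.refl (G : Multigraph) : Iso G G :=
  Iso.ofEquiv (Equiv.refl _) (Equiv.refl _) (fun _ => rfl) (fun _ => rfl)

def Iso.trans (φ : Iso G H) (ψ : Iso H K) : Iso G K :=
  Iso.ofEquiv (φ.equivV.trans ψ.equivV) (φ.equivE.trans ψ.equivE)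
    (fun e => (ψ.map_o _).trans (congrArg ψ.onV (φ.map_o e)))
    (fun e => (ψ.map_t _).trans (congrArg ψ.onV (φ.map_t e)))

def Iso.symm (φ : Iso G H) : Iso H G :=
  Iso.ofEquiv φ.equivV.symm φ.equivE.symm
    (fun e => φ.equivV.eq_symm_apply.2 <|
      (φ.map_o _).symm.trans (congrArg H.o (φ.equivE.apply_symm_apply e)))
    (fun e => φ.equivV.eq_symm_apply.2 <|
      (φ.map_t _).symm.trans (congrArg H.t (φ.equivE.apply_symm_apply e)))

theorem Iso.symm_onV_apply (φ : Iso G H) (v : G.V) : φ.symm.onV (φ.onV v) = v :=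
  φ.equivV.symm_apply_apply v

theorem RootedIso.refl (G : Multigraph) (S : G.V) : RootedIso G S G S :=
  ⟨Iso.refl G, rfl⟩

theorem RootedIso.symm {S : G.V} {R : H.V} : RootedIso G S H R → RootedIso H R G S
  | ⟨φ, h⟩ => ⟨φ.symm, by rw [← h, φ.symm_onV_apply]⟩

theorem RootedIso.trans {S : G.V} {R : H.V} {Q : K.V} :
    RootedIso G S H R → RootedIso H R K Q → RootedIso G S K Q
  | ⟨φ, h⟩, ⟨ψ, h'⟩ => ⟨φ.trans ψ, (congrArg ψ.onV h).trans h'⟩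

def Iso.outEdgeEquiv (φ : Iso G H) {r : G.V} {s : H.V} (h : φ.onV r = s) :
    {e : G.E // G.o e = r} ≃ {e : H.E // H.o e = s} :=
  Equiv.subtypeEquiv φ.equivE fun e => by
    show _ ↔ H.o (φ.onE e) = s
    rw [φ.map_o, ← h]
    exact φ.bijV.1.eq_iff.symm

end Isomorphisms

section Reachability

variable {G H : Multigraph}

def Walk.append {a b : G.V} (w : Walk G a b) : ∀ {c : G.V}, Walk G b c → Walk G a c
  | _, .nil => w
  | _, .snoc u e h => .snoc (w.append u) e h

theorem Reaches.trans {a b c : G.V} : Reaches G a b → Reaches G b c → Reaches G a c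
  | ⟨w⟩, ⟨u⟩ => ⟨w.append u⟩

theorem Reaches.map (φ : Hom G H) {a b : G.V} (h : Reaches G a b) :
    Reaches H (φ.onV a) (φ.onV b) := by
  obtain ⟨w⟩ := h
  induction w with
  | nil => exact ⟨.nil⟩
  | snoc w e he ih =>
    obtain ⟨u⟩ := ih
    rw [← φ.map_t]
    exact ⟨u.snoc (φ.onE e) (by rw [φ.map_o, he])⟩

theorem Iso.reaches_iff (φ : Iso G H) {a b : G.V} :
    Reaches H (φ.onV a) (φ.onV b) ↔ Reaches G a b := by
  refine ⟨fun h => ?_, Reaches.map φ.toHom⟩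
  simpa only [φ.symm_onV_apply] using h.map φ.symm.toHom

def outHom (G : Multigraph) (v : G.V) : Hom (outGraph G v) G :=
  ⟨Subtype.val, Subtype.val, fun _ => rfl, fun _ => rfl⟩

theorem reaches_outGraph_of_walk {v : G.V} (x : (outGraph G v).V) {b : G.V} (w : Walk G x.1 b)
    (hb : Reaches G v b) : Reaches (outGraph G v) x ⟨b, hb⟩ := by
  induction w with
  | nil => exact ⟨.nil⟩
  | snoc w e he ih =>
    obtain ⟨u⟩ := ih (x.2.trans ⟨w⟩)
    exact ⟨u.snoc ⟨e, he ▸ x.2.trans ⟨w⟩⟩ (Subtype.ext he)⟩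

theorem reaches_outGraph_iff {v : G.V} {x y : (outGraph G v).V} :
    Reaches (outGraph G v) x y ↔ Reaches G x.1 y.1 :=
  ⟨Reaches.map (outHom G v), fun ⟨w⟩ => reaches_outGraph_of_walk x w y.2⟩

end Reachability

section OutGraphs

variable {G H : Multigraph}

def Iso.outGraph (φ : Iso G H) (u : G.V) : Iso (outGraph G u) (outGraph H (φ.onV u)) :=
  Iso.ofEquiv (Equiv.subtypeEquiv φ.equivV fun _ => φ.reaches_iff.symm)
    (Equiv.subtypeEquiv φ.equivE fun d => by
      show _ ↔ Reaches H (φ.onV u) (H.o (φ.onE d))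
      rw [φ.map_o]
      exact φ.reaches_iff.symm)
    (fun e => Subtype.ext (φ.map_o e.1)) (fun e => Subtype.ext (φ.map_t e.1))

theorem rootedIso_outGraph (φ : Iso G H) (u : G.V) :
    RootedIso (outGraph G u) (rootOut G u) (outGraph H (φ.onV u)) (rootOut H (φ.onV u)) :=
  ⟨φ.outGraph u, rfl⟩

def outGraphOutGraphIso (v : G.V) (u : (outGraph G v).V) :
    Iso (outGraph (outGraph G v) u) (outGraph G u.1) :=
  Iso.ofEquiv
    { toFun := fun y => ⟨y.1.1, reaches_outGraph_iff.1 y.2⟩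
      invFun := fun z => ⟨⟨z.1, u.2.trans z.2⟩, reaches_outGraph_iff.2 z.2⟩
      left_inv := fun _ => rfl
      right_inv := fun _ => rfl }
    { toFun := fun d => ⟨d.1.1, reaches_outGraph_iff.1 d.2⟩
      invFun := fun d => ⟨⟨d.1, u.2.trans d.2⟩, reaches_outGraph_iff.2 d.2⟩
      left_inv := fun _ => rfl
      right_inv := fun _ => rfl }
    (fun _ => rfl) (fun _ => rfl)

theorem rootedIso_outGraph_outGraph (v : G.V) (u : (outGraph G v).V) :
    RootedIso (outGraph (outGraph G v) u) (rootOut _ u) (outGraph G u.1) (rootOut G u.1) :=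
  ⟨outGraphOutGraphIso v u, rfl⟩

theorem oequiv_of_iso {v w : G.V} (φ : Iso (outGraph G v) (outGraph G w))
    (u : (outGraph G v).V) : OEquiv G u.1 (φ.onV u).1 :=
  ((rootedIso_outGraph_outGraph v u).symm.trans (rootedIso_outGraph φ u)).trans
    (rootedIso_outGraph_outGraph w (φ.onV u))

theorem oequiv_equivalence (G : Multigraph) : Equivalence (OEquiv G) :=
  ⟨fun _ => RootedIso.refl _ _, RootedIso.symm, RootedIso.trans⟩

def outGraphRootEdgeEquiv (x : G.V) :
    {d : (outGraph G x).E // (outGraph G x).o d = rootOut G x} ≃ {e : G.E // G.o e = x} where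
  toFun d := ⟨d.1.1, congrArg Subtype.val d.2⟩
  invFun e := ⟨⟨e.1, by rw [e.2]; exact ⟨.nil⟩⟩, Subtype.ext e.2⟩
  left_inv _ := rfl
  right_inv _ := rfl

def rootEdgeEquiv {x y : G.V} (φ : Iso (outGraph G x) (outGraph G y))
    (h : φ.onV (rootOut G x) = rootOut G y) : {e : G.E // G.o e = x} ≃ {e : G.E // G.o e = y} :=
  (outGraphRootEdgeEquiv x).symm.trans ((φ.outEdgeEquiv h).trans (outGraphRootEdgeEquiv y))

theorem oequiv_t_rootEdgeEquiv {x y : G.V} (φ : Iso (outGraph G x) (outGraph G y))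
    (h : φ.onV (rootOut G x) = rootOut G y) (e : {e : G.E // G.o e = x}) :
    OEquiv G (G.t e.1) (G.t (rootEdgeEquiv φ h e).1) := by
  have := oequiv_of_iso φ ((outGraph G x).t ((outGraphRootEdgeEquiv x).symm e).1)
  rwa [← φ.map_t] at this

end OutGraphs

section Representatives

variable (G : Multigraph)

def oequivSetoid : Setoid G.V := ⟨OEquiv G, oequiv_equivalence G⟩

def rep (v : G.V) : G.V := (Quotient.mk (oequivSetoid G) v).out

variable {G}

theorem rep_eq_rep_iff {v w : G.V} : rep G v = rep G w ↔ OEquiv G v w :=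
  Quotient.out_inj.trans Quotient.eq

theorem oequiv_rep (v : G.V) : OEquiv G v (rep G v) :=
  RootedIso.symm (Quotient.mk_out (s := oequivSetoid G) v)

def toRepEdge (v : G.V) : {e : G.E // G.o e = v} ≃ {e : G.E // G.o e = rep G v} :=
  rootEdgeEquiv (oequiv_rep v).choose (oequiv_rep v).choose_spec

def canonEdge (e : G.E) : G.E := (toRepEdge (G.o e) ⟨e, rfl⟩).1

theorem canonEdge_eq {e : G.E} {v : G.V} (h : G.o e = v) :
    canonEdge e = (toRepEdge v ⟨e, h⟩).1 := by
  subst h; rfl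

theorem o_canonEdge (e : G.E) : G.o (canonEdge e) = rep G (G.o e) :=
  (toRepEdge (G.o e) ⟨e, rfl⟩).2

theorem oequiv_t_canonEdge (e : G.E) : OEquiv G (G.t e) (G.t (canonEdge e)) :=
  oequiv_t_rootEdgeEquiv _ _ ⟨e, rfl⟩

end Representatives

def oGraphEquiv (G : Multigraph) : GraphEquiv G where
  rV := OEquiv G
  rE e f := canonEdge e = canonEdge f
  equivV := oequiv_equivalence G
  equivE := ⟨fun _ => rfl, Eq.symm, Eq.trans⟩
  compat_o e f h := rep_eq_rep_iff.1 (by rw [← o_canonEdge, h, o_canonEdge])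
  compat_t e f h :=
    (oequiv_equivalence G).trans (oequiv_t_canonEdge e)
      (h ▸ (oequiv_equivalence G).symm (oequiv_t_canonEdge f))

theorem oGraphEquiv_nonEdgeCollapsing (G : Multigraph) : (oGraphEquiv G).NonEdgeCollapsing := by
  intro v v' hv e he
  have hrep : G.o (canonEdge e) = rep G v' := by rw [o_canonEdge, he, rep_eq_rep_iff.2 hv]
  set E' := toRepEdge (G := G) v'
  refine ⟨(E'.symm ⟨canonEdge e, hrep⟩).1, ⟨(E'.symm _).2, ?_⟩, ?_⟩
  · show canonEdge e = canonEdge _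
    rw [canonEdge_eq (E'.symm _).2, Subtype.coe_eta, Equiv.apply_symm_apply]
  · rintro f ⟨hf, hef⟩
    have : E' ⟨f, hf⟩ = ⟨canonEdge e, hrep⟩ := Subtype.ext ((canonEdge_eq hf).symm.trans hef.symm)
    rw [← this, Equiv.symm_apply_apply]

end

end Multigraph

open Multigraph

/-- Every multigraph has a non-edge-collapsing equivalence relation whose
vertex component is o-equivalence. -/
theorem statement2 (G : Multigraph) :
    ∃ s : GraphEquiv G, s.NonEdgeCollapsing ∧ ∀ v w : G.V, s.rV v w ↔ OEquiv G v w :=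
  ⟨oGraphEquiv G, oGraphEquiv_nonEdgeCollapsing G, fun _ _ => Iff.rfl⟩
end

section
/- For any rooted multigraph (G, S), any vertex x of G, and any walk w starting at S with terminus x, the unfolding tree T(G_x, x) of the outgoing subgraph rooted at x is rooted-isomorphic to the half-tree T(G, S)_w of the unfolding tree rooted at the walk w. -/
open Multigraph

/-!
Prefixing by `w` sends a walk of `G_x` from `x` to a walk of `G` from `S` extending `w`, and every
extension of `w` arises uniquely this way. In both trees an edge is determined by its terminus (the
last step of a walk), so this bijection on vertices is an isomorphism of rooted trees.
-/

namespace Multigraph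

theorem Hom.injective_onE {G H : Multigraph} (φ : Hom G H) (hG : Function.Injective G.t)
    (hφ : Function.Injective φ.onV) : Function.Injective φ.onE := fun g g' h =>
  hG <| hφ <| by rw [← φ.map_t, ← φ.map_t, h]

theorem Hom.surjective_onE {G H : Multigraph} (φ : Hom G H) (hH : Function.Injective H.t)
    (h : ∀ f, ∃ g, φ.onV (G.t g) = H.t f) : Function.Surjective φ.onE := fun f =>
  let ⟨g, hg⟩ := h f
  ⟨g, hH ((φ.map_t g).trans hg)⟩

variable {G : Multigraph} {S : G.V}

/-- The edges of a walk, last edge first. -/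
def Walk.edges : ∀ {z : G.V}, Walk G S z → List G.E
  | _, .nil => []
  | _, .snoc u e _ => e :: u.edges

theorem Walk.sigma_eq_of_edges_eq {z : G.V} (u : Walk G S z) :
    ∀ {z' : G.V} (u' : Walk G S z'), u.edges = u'.edges →
      (⟨z, u⟩ : WalkFrom G S) = ⟨z', u'⟩ := by
  induction u with
  | nil =>
    rintro _ (_ | _) h
    · rfl
    · simp [Walk.edges] at h
  | snoc u e he ih =>
    rintro _ (_ | ⟨u', e', he'⟩) h
    · simp [Walk.edges] at h
    · simp only [Walk.edges, List.cons.injEq] at h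
      obtain ⟨rfl, h⟩ := h
      obtain ⟨rfl, h⟩ := Sigma.mk.inj_iff.mp (ih u' h)
      cases h
      rfl

theorem IsPrefix.length_le {w u : WalkFrom G S} (h : IsPrefix G S w u) :
    w.2.length ≤ u.2.length := by
  induction h with
  | refl => exact le_rfl
  | snoc _ _ _ _ ih => exact ih.trans (Nat.le_succ _)

theorem unfoldTree_t_injective : Function.Injective (unfoldTree G S).t := by
  rintro ⟨z, u, e, he⟩ ⟨z', u', e', he'⟩ h
  have hedges := congrArg (fun a : WalkFrom G S => a.2.edges) h
  simp only [unfoldTree, Walk.edges, List.cons.injEq] at hedges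
  obtain ⟨rfl, hedges⟩ := hedges
  obtain ⟨rfl, hu⟩ := Sigma.mk.inj_iff.mp (Walk.sigma_eq_of_edges_eq u u' hedges)
  cases hu
  rfl

theorem halfTree_t_injective (w : WalkFrom G S) : Function.Injective (halfTree G S w).t :=
  fun _ _ h => Subtype.ext (unfoldTree_t_injective (congrArg Subtype.val h))

def Walk.appendOut {v : G.V} (w : Walk G S v) :
    ∀ {y : (outGraph G v).V}, Walk (outGraph G v) (rootOut G v) y → Walk G S y.1
  | _, .nil => w
  | _, .snoc p e h => (w.appendOut p).snoc e.1 (congrArg Subtype.val h)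

theorem Walk.edges_appendOut {v : G.V} (w : Walk G S v) :
    ∀ {y : (outGraph G v).V} (p : Walk (outGraph G v) (rootOut G v) y),
      (w.appendOut p).edges = p.edges.map Subtype.val ++ w.edges
  | _, .nil => rfl
  | _, .snoc p _ _ => by simp only [appendOut, edges, edges_appendOut w p]; rfl

theorem Walk.isPrefix_appendOut {v : G.V} (w : Walk G S v) :
    ∀ {y : (outGraph G v).V} (p : Walk (outGraph G v) (rootOut G v) y),
      IsPrefix G S ⟨v, w⟩ ⟨y.1, w.appendOut p⟩
  | _, .nil => .refl _
  | _, .snoc p e h => .snoc _ e.1 (congrArg Subtype.val h) (isPrefix_appendOut w p)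

theorem IsPrefix.exists_appendOut {v : G.V} {w : Walk G S v} {u : WalkFrom G S}
    (h : IsPrefix G S ⟨v, w⟩ u) :
    ∃ (y : (outGraph G v).V) (p : Walk (outGraph G v) (rootOut G v) y),
      (⟨y.1, w.appendOut p⟩ : WalkFrom G S) = u := by
  induction h with
  | refl => exact ⟨rootOut G v, .nil, rfl⟩
  | @snoc z u e he _ ih =>
    obtain ⟨y, p, hy⟩ := ih
    have hyz : y.1 = z := congrArg Sigma.fst hy
    have hreach : Reaches G v (G.o e) := he ▸ hyz ▸ y.2
    refine ⟨_, p.snoc ⟨e, hreach⟩ (Subtype.ext (he.trans hyz.symm)), ?_⟩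
    exact Walk.sigma_eq_of_edges_eq _ _ (congrArg (fun a : WalkFrom G S => e :: a.2.edges) hy)

def halfTreeHom {v : G.V} (w : Walk G S v) :
    Hom (unfoldTree (outGraph G v) (rootOut G v)) (halfTree G S ⟨v, w⟩) where
  onV a := ⟨⟨a.1.1, w.appendOut a.2⟩, w.isPrefix_appendOut a.2⟩
  onE g := ⟨⟨g.1.1, (w.appendOut g.2.1, ⟨g.2.2.1.1, congrArg Subtype.val g.2.2.2⟩)⟩,
    w.isPrefix_appendOut g.2.1⟩
  map_o _ := rfl
  map_t _ := rfl

theorem halfTreeHom_injective_onV {v : G.V} (w : Walk G S v) :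
    Function.Injective (halfTreeHom w).onV := by
  rintro ⟨y, p⟩ ⟨y', p'⟩ h
  have hedges := congrArg (fun a : (halfTree G S ⟨v, w⟩).V => a.1.2.edges) h
  simp only [halfTreeHom, Walk.edges_appendOut, List.append_cancel_right_eq] at hedges
  exact Walk.sigma_eq_of_edges_eq p p' (List.map_injective_iff.mpr Subtype.val_injective hedges)

theorem halfTreeHom_surjective_onV {v : G.V} (w : Walk G S v) :
    Function.Surjective (halfTreeHom w).onV := by
  rintro ⟨u, hu⟩
  obtain ⟨y, p, rfl⟩ := hu.exists_appendOut
  exact ⟨⟨y, p⟩, rfl⟩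

/-- The terminus of a half-tree edge is a proper extension of `w`, so its preimage is a
non-empty walk. -/
theorem halfTreeHom_exists_t_eq {v : G.V} (w : Walk G S v) (f : (halfTree G S ⟨v, w⟩).E) :
    ∃ g, (halfTreeHom w).onV ((unfoldTree (outGraph G v) (rootOut G v)).t g) =
      (halfTree G S ⟨v, w⟩).t f := by
  obtain ⟨⟨y, _ | ⟨p, e, he⟩⟩, hf⟩ := halfTreeHom_surjective_onV w ((halfTree G S ⟨v, w⟩).t f)
  · obtain ⟨⟨z, u, e, he⟩, hu⟩ := f
    have hlen := congrArg (fun a : (halfTree G S ⟨v, w⟩).V => a.1.2.length) hf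
    have hle := hu.length_le
    simp only [halfTreeHom, Walk.appendOut, halfTree, Walk.length] at hlen hle
    exact absurd (hlen ▸ hle) (Nat.not_succ_le_self _)
  · exact ⟨⟨_, p, e, he⟩, hf⟩

def halfTreeIso {v : G.V} (w : Walk G S v) :
    Iso (unfoldTree (outGraph G v) (rootOut G v)) (halfTree G S ⟨v, w⟩) where
  toHom := halfTreeHom w
  bijV := ⟨halfTreeHom_injective_onV w, halfTreeHom_surjective_onV w⟩
  bijE := ⟨(halfTreeHom w).injective_onE unfoldTree_t_injective (halfTreeHom_injective_onV w),
    (halfTreeHom w).surjective_onE (halfTree_t_injective _) (halfTreeHom_exists_t_eq w)⟩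

end Multigraph

theorem statement9_general (G : Multigraph) (S : G.V)
    (x : G.V) (w : WalkFrom G S) (hw : term w = x) :
    RootedIso (unfoldTree (outGraph G x) (rootOut G x)) (nilWalk (outGraph G x) (rootOut G x))
      (halfTree G S w) ⟨w, IsPrefix.refl w⟩ := by
  obtain ⟨v, w⟩ := w
  subst hw
  exact ⟨halfTreeIso w, rfl⟩

/-- The unfolding tree of the outgoing subgraph `G_x` is rooted-isomorphic
to the half-tree of `T(G,S)` at any walk `w` with terminus `x`. -/
theorem statement9 (G : Multigraph) (S : G.V) (hS : IsRoot G S)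
    (x : G.V) (w : WalkFrom G S) (hw : term w = x) :
    RootedIso (unfoldTree (outGraph G x) (rootOut G x)) (nilWalk (outGraph G x) (rootOut G x))
      (halfTree G S w) ⟨w, IsPrefix.refl w⟩ :=
  statement9_general G S x w hw
end

section
/- Let G be a finite robustly rooted multigraph with root S. Then for every basis B of a cofinite inescapable subspace of the unfolding tree T(G, S), the set of termini T[B] = {T(b) : b ∈ B} contains a root of G. -/
open Multigraph

/-! Robust rootedness lets one walk from `S` forever while staying at roots, so for every `N`
there is a walk of length `N` all of whose prefixes end at roots. A cofinite inescapable
subspace contains every walk longer than all its finitely many generators: such a walk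
extends into the subspace, and the generator below that extension is comparable with it;
lying above it would force equal lengths, hence equality. A long root-walk therefore lies
in the subspace, and its basis element is one of its prefixes.
-/

namespace Multigraph

variable {G : Multigraph} {S : G.V}

-- Inverts `snoc` non-dependently: `cases` cannot unify the index `G.t e` with `G.t e'`.
def WalkFrom.dropLast : WalkFrom G S → WalkFrom G S
  | ⟨_, .nil⟩ => ⟨S, .nil⟩
  | ⟨_, .snoc u _ _⟩ => ⟨_, u⟩

namespace IsPrefix

theorem length_le_s12 {a b : WalkFrom G S} (h : IsPrefix G S a b) : a.2.length ≤ b.2.length := by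
  induction h with
  | refl => exact le_rfl
  | snoc _ _ _ _ ih => exact Nat.le_succ_of_le ih

theorem eq_of_length_le {a b : WalkFrom G S} (h : IsPrefix G S a b)
    (hl : b.2.length ≤ a.2.length) : a = b := by
  cases h with
  | refl => rfl
  | snoc u e h hp =>
    have : a.2.length ≤ u.length := hp.length_le_s12
    simp only [Walk.length] at hl
    omega

theorem eq_or_of_snoc {b : WalkFrom G S} {v : G.V} {u : Walk G S v} {e : G.E}
    {h : G.o e = v} (hb : IsPrefix G S b ⟨G.t e, u.snoc e h⟩) :
    b = ⟨G.t e, u.snoc e h⟩ ∨ IsPrefix G S b ⟨v, u⟩ := by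
  generalize hw : (⟨G.t e, u.snoc e h⟩ : WalkFrom G S) = w at hb ⊢
  cases hb with
  | refl => exact Or.inl rfl
  | snoc u' _ _ hp =>
    have : (⟨_, u'⟩ : WalkFrom G S) = ⟨v, u⟩ := congrArg WalkFrom.dropLast hw.symm
    exact Or.inr (this ▸ hp)

theorem total {a b w : WalkFrom G S} (ha : IsPrefix G S a w) (hb : IsPrefix G S b w) :
    IsPrefix G S a b ∨ IsPrefix G S b a := by
  induction ha with
  | refl => exact Or.inr hb
  | snoc u e h hp ih =>
    rcases hb.eq_or_of_snoc with rfl | hb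
    · exact Or.inl (.snoc u e h hp)
    · exact ih hb

end IsPrefix

theorem CofiniteSubspace.exists_forall_length_le_mem {𝒮 : Set (WalkFrom G S)}
    (hcof : CofiniteSubspace G S 𝒮) (hin : Inescapable G S 𝒮) :
    ∃ N, ∀ w : WalkFrom G S, N ≤ w.2.length → w ∈ 𝒮 := by
  obtain ⟨F, hF, rfl⟩ := hcof
  obtain ⟨N, hN⟩ := (hF.image fun x => x.2.length).bddAbove
  refine ⟨N, fun w hw => ?_⟩
  obtain ⟨u, ⟨x, hxF, hxu⟩, hwu⟩ := hin w
  rcases hwu.total hxu with hwx | hxw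
  · obtain rfl := hwx.eq_of_length_le ((hN ⟨x, hxF, rfl⟩).trans hw)
    exact ⟨w, hxF, .refl w⟩
  · exact ⟨x, hxF, hxw⟩

theorem exists_walk_length_eq_forall_prefix_isRoot
    (hstep : ∀ v, IsRoot G v → ∃ e, G.o e = v ∧ IsRoot G (G.t e)) (hS : IsRoot G S) (n : ℕ) :
    ∃ w : WalkFrom G S, w.2.length = n ∧ ∀ b, IsPrefix G S b w → IsRoot G (term b) := by
  induction n with
  | zero =>
    refine ⟨⟨S, .nil⟩, rfl, fun b hb => ?_⟩
    obtain rfl := hb.eq_of_length_le (Nat.zero_le _)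
    exact hS
  | succ n ih =>
    obtain ⟨⟨v, u⟩, hu, hroots⟩ := ih
    obtain ⟨e, he, hroot⟩ := hstep v (hroots _ (.refl _))
    refine ⟨⟨G.t e, u.snoc e he⟩, congrArg (· + 1) hu, fun b hb => ?_⟩
    rcases hb.eq_or_of_snoc with rfl | hb
    · exact hroot
    · exact hroots b hb

end Multigraph

theorem statement12_general (G : Multigraph)
    (hrob : RobustlyRooted G) (S : G.V) (hS : IsRoot G S)
    (𝒮 B : Set (WalkFrom G S))
    (hin : Inescapable G S 𝒮) (hcof : CofiniteSubspace G S 𝒮)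
    (hB : IsBasis G S 𝒮 B) :
    ∃ b ∈ B, IsRoot G (term b) := by
  obtain ⟨N, hN⟩ := hcof.exists_forall_length_le_mem hin
  obtain ⟨w, hw, hroots⟩ := exists_walk_length_eq_forall_prefix_isRoot hrob.2 hS N
  obtain ⟨b, hbB, hbw⟩ := hB.2.2 w (hN w hw.ge)
  exact ⟨b, hbB, hroots b hbw⟩

/-- In a finite robustly rooted graph, the set of termini of any basis of a
cofinite inescapable subspace of the unfolding tree contains a root. -/
theorem statement12 (G : Multigraph) [Fintype G.V] [Fintype G.E]
    (hrob : RobustlyRooted G) (S : G.V) (hS : IsRoot G S)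
    (𝒮 B : Set (WalkFrom G S)) (hsub : IsSubspace G S 𝒮)
    (hin : Inescapable G S 𝒮) (hcof : CofiniteSubspace G S 𝒮)
    (hB : IsBasis G S 𝒮 B) :
    ∃ b ∈ B, IsRoot G (term b) :=
  statement12_general G hrob S hS 𝒮 B hin hcof hB
end
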